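/- arXiv:1509.02629 — 4 statements merged into one kernel-verified Lean document; each statement's English description precedes it below -/
import Mathlib

section
/- Let x : [0,∞) → ℝ be nonnegative, continuous, with x(t)² ≤ e^{-2γt}·C² + 2q·∫₀ᵗ e^{-2γ(t-τ)} x(τ)·C dτ for all t ≥ 0, where γ > 0, q ≥ 0, C ≥ 0. If additionally x(τ) ≤ (e^{-γτ} + (q/γ)^{1/2})·C for all τ, then x(t) ≤ (e^{-γt} + √2·e^{-γt/2}·(q/γ)^{1/2} + (q/γ)^{3/4})·C for all t ≥ 0. -/
theorem bootstrap_second_step (x : ℝ → ℝ) (γ q C : ℝ)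
    (hγ : 0 < γ) (hq : 0 ≤ q) (hC : 0 ≤ C)
    (hx_nonneg : ∀ t : ℝ, 0 ≤ t → 0 ≤ x t)
    (hx_cont : Continuous x)
    (hint : ∀ t : ℝ, 0 ≤ t →
      x t ^ 2 ≤ Real.exp (-2 * γ * t) * C ^ 2
        + 2 * q * ∫ τ in (0:ℝ)..t, Real.exp (-2 * γ * (t - τ)) * x τ * C)
    (hfirst : ∀ τ : ℝ, 0 ≤ τ → x τ ≤ (Real.exp (-γ * τ) + (q / γ) ^ ((1:ℝ)/2)) * C) :
    ∀ t : ℝ, 0 ≤ t →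
      x t ≤ (Real.exp (-γ * t) + Real.sqrt 2 * Real.exp (-γ * t / 2) * (q / γ) ^ ((1:ℝ)/2)
        + (q / γ) ^ ((3:ℝ)/4)) * C := by
  intro t ht
  set u : ℝ := q / γ with hu
  have hu0 : 0 ≤ u := div_nonneg hq hγ.le
  set s : ℝ := u ^ ((1:ℝ)/2) with hs
  have hs0 : 0 ≤ s := Real.rpow_nonneg hu0 _
  have hs2 : s ^ 2 = u := by
    rw [hs, ← Real.rpow_natCast (u ^ ((1:ℝ)/2)) 2, ← Real.rpow_mul hu0]
    norm_num
  set c : ℝ := u ^ ((3:ℝ)/4) with hc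
  have hc0 : 0 ≤ c := Real.rpow_nonneg hu0 _
  have h32 : u ^ ((3:ℝ)/2) = u * s := by
    rw [show (3:ℝ)/2 = 1 + 1/2 by norm_num, Real.rpow_add' hu0 (by norm_num),
        Real.rpow_one, hs]
  have hc2 : c ^ 2 = u * s := by
    rw [hc, ← Real.rpow_natCast (u ^ ((3:ℝ)/4)) 2, ← Real.rpow_mul hu0, ← h32]
    norm_num
  -- antiderivative
  set F : ℝ → ℝ := fun τ => C ^ 2 * ((1/γ) * Real.exp (γ * τ - 2 * γ * t)
      + (s / (2 * γ)) * Real.exp (2 * γ * τ - 2 * γ * t)) with hF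
  have hderiv : ∀ τ ∈ Set.uIcc (0:ℝ) t, HasDerivAt F
      (Real.exp (-2 * γ * (t - τ)) * ((Real.exp (-γ * τ) + s) * C) * C) τ := by
    intro τ _
    have h1 : HasDerivAt (fun τ => γ * τ - 2 * γ * t) γ τ := by
      simpa using ((hasDerivAt_id τ).const_mul γ).sub_const (2 * γ * t)
    have h2 : HasDerivAt (fun τ => 2 * γ * τ - 2 * γ * t) (2 * γ) τ := by
      simpa using ((hasDerivAt_id τ).const_mul (2 * γ)).sub_const (2 * γ * t)
    have e1 := (h1.exp.const_mul (1/γ))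
    have e2 := (h2.exp.const_mul (s / (2 * γ)))
    have := ((e1.add e2).const_mul (C ^ 2))
    refine this.congr_deriv ?_
    have hA : Real.exp (γ * τ - 2 * γ * t) = Real.exp (-2 * γ * (t - τ)) * Real.exp (-γ * τ) := by
      rw [← Real.exp_add]; ring_nf
    have hB : Real.exp (2 * γ * τ - 2 * γ * t) = Real.exp (-2 * γ * (t - τ)) := by
      ring_nf
    rw [hA, hB]
    field_simp
  have hFcont : Continuous fun τ => Real.exp (-2 * γ * (t - τ)) * ((Real.exp (-γ * τ) + s) * C) * C :=
    by fun_prop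
  have hint_eq : (∫ τ in (0:ℝ)..t, Real.exp (-2 * γ * (t - τ)) * ((Real.exp (-γ * τ) + s) * C) * C)
      = F t - F 0 :=
    intervalIntegral.integral_eq_sub_of_hasDerivAt hderiv (hFcont.intervalIntegrable 0 t)
  -- monotone comparison of integrals
  have hmono : (∫ τ in (0:ℝ)..t, Real.exp (-2 * γ * (t - τ)) * x τ * C)
      ≤ ∫ τ in (0:ℝ)..t, Real.exp (-2 * γ * (t - τ)) * ((Real.exp (-γ * τ) + s) * C) * C := by
    apply intervalIntegral.integral_mono_on ht
    · exact ((Continuous.mul (by fun_prop : Continuous fun τ : ℝ => Real.exp (-2 * γ * (t - τ))) hx_cont).mul continuous_const).intervalIntegrable 0 t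
    · exact hFcont.intervalIntegrable 0 t
    · intro τ hτ
      have := hfirst τ hτ.1
      have hexp : 0 ≤ Real.exp (-2 * γ * (t - τ)) := (Real.exp_pos _).le
      nlinarith [hx_nonneg τ hτ.1, mul_nonneg hexp hC]
  have hkey := hint t ht
  -- bound F t - F 0
  have hFt : F t - F 0 ≤ C ^ 2 * ((1/γ) * Real.exp (-γ * t) + s / (2 * γ)) := by
    rw [hF]
    simp only
    have hE1 : γ * t - 2 * γ * t = -γ * t := by ring
    have hE2 : 2 * γ * t - 2 * γ * t = 0 := by ring
    rw [hE1, hE2]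
    have h01 : 0 < Real.exp (γ * 0 - 2 * γ * t) := Real.exp_pos _
    have h02 : 0 < Real.exp (2 * γ * 0 - 2 * γ * t) := Real.exp_pos _
    have hγ' : 0 < (1:ℝ)/γ := by positivity
    have hs2γ : 0 ≤ s / (2 * γ) := by positivity
    have hC2 : 0 ≤ C ^ 2 := sq_nonneg C
    rw [Real.exp_zero]
    nlinarith [mul_pos hγ' h01, mul_nonneg hs2γ h02.le, sq_nonneg C]
  -- combine
  have hq2 : 2 * q * (∫ τ in (0:ℝ)..t, Real.exp (-2 * γ * (t - τ)) * x τ * C)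
      ≤ 2 * q * (C ^ 2 * ((1/γ) * Real.exp (-γ * t) + s / (2 * γ))) := by
    apply mul_le_mul_of_nonneg_left _ (by positivity)
    rw [← hint_eq] at hFt
    exact hmono.trans hFt
  have hqu : q = u * γ := by rw [hu]; field_simp
  have hbound : x t ^ 2 ≤ C ^ 2 * (Real.exp (-γ * t) ^ 2 + 2 * s ^ 2 * Real.exp (-γ * t) + u * s) := by
    have h2e : Real.exp (-2 * γ * t) = Real.exp (-γ * t) ^ 2 := by
      rw [← Real.exp_nat_mul]; ring_nf
    calc x t ^ 2 ≤ Real.exp (-2 * γ * t) * C ^ 2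
        + 2 * q * (C ^ 2 * ((1/γ) * Real.exp (-γ * t) + s / (2 * γ))) := by
          linarith [hkey, hq2]
      _ = C ^ 2 * (Real.exp (-γ * t) ^ 2 + 2 * s ^ 2 * Real.exp (-γ * t) + u * s) := by
          rw [h2e, hqu, hs2]
          field_simp
          ring
  -- RHS squared dominates
  set R : ℝ := (Real.exp (-γ * t) + Real.sqrt 2 * Real.exp (-γ * t / 2) * s + c) * C with hR
  have hR0 : 0 ≤ R := by
    have : 0 ≤ Real.sqrt 2 * Real.exp (-γ * t / 2) * s := by positivity
    have := (Real.exp_pos (-γ * t)).le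
    apply mul_nonneg _ hC
    positivity
  have hRsq : C ^ 2 * (Real.exp (-γ * t) ^ 2 + 2 * s ^ 2 * Real.exp (-γ * t) + u * s) ≤ R ^ 2 := by
    rw [hR, mul_pow]
    set a := Real.exp (-γ * t) with ha
    set e := Real.exp (-γ * t / 2) with he'
    set k := Real.sqrt 2 with hk
    have hk2 : k ^ 2 = 2 := Real.sq_sqrt (by norm_num)
    have hea : e ^ 2 = a := by
      rw [he', ha, sq, ← Real.exp_add]
      congr 1
      ring
    have ha0 : 0 ≤ a := (Real.exp_pos _).le
    have he0 : 0 ≤ e := (Real.exp_pos _).le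
    have hk0 : 0 ≤ k := Real.sqrt_nonneg 2
    clear_value a e k s c u
    have hkes2 : (k * e * s) ^ 2 = 2 * a * s ^ 2 := by
      rw [mul_pow, mul_pow, hk2, hea]
    have hkes0 : 0 ≤ k * e * s := mul_nonneg (mul_nonneg hk0 he0) hs0
    have key : a ^ 2 + 2 * s ^ 2 * a + u * s ≤ (a + k * e * s + c) ^ 2 := by
      have expand : (a + k * e * s + c) ^ 2
          = a ^ 2 + (k * e * s) ^ 2 + c ^ 2
            + 2 * (a * (k * e * s) + a * c + (k * e * s) * c) := by ring
      rw [expand, hkes2, hc2]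
      have h1 : 0 ≤ a * (k * e * s) := mul_nonneg ha0 hkes0
      have h2 : 0 ≤ a * c := mul_nonneg ha0 hc0
      have h3 : 0 ≤ (k * e * s) * c := mul_nonneg hkes0 hc0
      linarith
    rw [mul_comm (C ^ 2)]
    exact mul_le_mul_of_nonneg_right key (sq_nonneg C)
  have hx2 : x t ^ 2 ≤ R ^ 2 := hbound.trans hRsq
  have hsq := Real.sqrt_le_sqrt hx2
  rwa [Real.sqrt_sq (hx_nonneg t ht), Real.sqrt_sq hR0] at hsq
end

section
/- Let H be a Hilbert space and U, V bounded operators on H with U unitary and V a contraction (‖V‖ ≤ 1). Then for any unit vector ψ ∈ H, ‖(U − V)* ψ‖² ≤ 2·|⟨(U − V)* ψ, U* ψ⟩|. -/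
open ContinuousLinearMap in
theorem norm_sq_le_two_abs_inner_of_unitary {H : Type*} [NormedAddCommGroup H]
    [InnerProductSpace ℂ H] [CompleteSpace H]
    (U V : H →L[ℂ] H) (hU : U ∈ unitary (H →L[ℂ] H)) (hV : ‖V‖ ≤ 1)
    (ψ : H) (hψ : ‖ψ‖ = 1) :
    ‖(ContinuousLinearMap.adjoint (U - V)) ψ‖ ^ 2
      ≤ 2 * ‖(@inner ℂ H _ ((ContinuousLinearMap.adjoint (U - V)) ψ)
          ((ContinuousLinearMap.adjoint U) ψ))‖ := by
  set a := ContinuousLinearMap.adjoint U ψ with ha_def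
  set b := ContinuousLinearMap.adjoint V ψ with hb_def
  have hx : (ContinuousLinearMap.adjoint (U - V)) ψ = a - b := by
    simp [ha_def, hb_def, map_sub]
  have haU : (ContinuousLinearMap.adjoint U) ∈ unitary (H →L[ℂ] H) := by
    rw [← ContinuousLinearMap.star_eq_adjoint]
    exact Unitary.star_mem hU
  have ha : ‖a‖ = 1 := by
    rw [ha_def, (ContinuousLinearMap.adjoint U).norm_map_of_mem_unitary haU, hψ]
  have hb : ‖b‖ ≤ 1 := by
    calc ‖b‖ ≤ ‖ContinuousLinearMap.adjoint V‖ * ‖ψ‖ := (ContinuousLinearMap.adjoint V).le_opNorm ψ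
    _ ≤ 1 := by rw [hψ, mul_one, LinearIsometryEquiv.norm_map]; exact hV
  rw [hx]
  have key : ‖a - b‖ ^ 2 ≤ 2 * RCLike.re (inner ℂ (a - b) a) := by
    have h1 : ‖a - b‖ ^ 2 = ‖a‖ ^ 2 - 2 * RCLike.re (inner ℂ a b) + ‖b‖ ^ 2 :=
      norm_sub_sq a b
    have h2 : RCLike.re (inner ℂ (a - b) a) = ‖a‖ ^ 2 - RCLike.re (inner ℂ a b) := by
      simp only [inner_sub_left, map_sub]
      rw [inner_self_eq_norm_sq (𝕜 := ℂ), inner_re_symm]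
    have hb2 : ‖b‖ ^ 2 ≤ 1 := by rw [sq]; exact mul_le_one₀ hb (norm_nonneg b) hb
    rw [h1, h2, ha]
    linarith
  refine key.trans ?_
  have h3 : RCLike.re (inner ℂ (a - b) a) = (inner ℂ (a - b) a).re := rfl
  have := Complex.re_le_norm (inner ℂ (a - b) a)
  linarith
end

section
/- Let H be a Hilbert space, K a closed subspace with orthogonal projection P, and a a bounded operator with ‖a* v‖ ≤ M‖v‖ for v ∈ K^⊥ ∩ dom. If u ∈ H satisfies the inner-product estimate Re⟨P L u, P u⟩ = −g‖Pu‖² + h with |h| ≤ q‖Pu‖·‖u‖ and g ≥ γ > 0, then d/dt ‖P T_t u‖² evaluated via the semigroup generator L satisfies d/dt ‖P T_t u‖² ≤ −2γ‖P T_t u‖² + 2q‖P T_t u‖·‖u‖ whenever T_t is a contraction semigroup with generator L. -/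
theorem dissipativity_differential_inequality {H : Type*} [NormedAddCommGroup H]
    [InnerProductSpace ℂ H] [CompleteSpace H]
    (P L : H →L[ℂ] H) (hP_proj : P ∘L P = P) (hP_sa : ContinuousLinearMap.adjoint P = P)
    (T : ℝ → H →L[ℂ] H) (γ q : ℝ) (hγ : 0 < γ) (hq : 0 ≤ q)
    (hT0 : T 0 = 1)
    (hTcon : ∀ t : ℝ, 0 ≤ t → ‖T t‖ ≤ 1)
    (hTgen : ∀ (v : H) (t : ℝ), 0 ≤ t → HasDerivAt (fun s : ℝ => T s v) (L (T t v)) t)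
    (hdiss : ∀ w : H, ∃ g h : ℝ,
      (@inner ℂ H _ (P (L w)) (P w)).re = -g * ‖P w‖ ^ 2 + h ∧
        γ ≤ g ∧ |h| ≤ q * ‖P w‖ * ‖w‖)
    (u : H) :
    ∀ t : ℝ, 0 ≤ t → ∃ d : ℝ,
      HasDerivAt (fun s : ℝ => ‖P (T s u)‖ ^ 2) d t ∧
        d ≤ -2 * γ * ‖P (T t u)‖ ^ 2 + 2 * q * ‖P (T t u)‖ * ‖u‖ := by
  intro t ht
  letI : InnerProductSpace ℝ H := InnerProductSpace.rclikeToReal ℂ H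
  set w : H := T t u with hw
  -- derivative of s ↦ P (T s u)
  have h1 : HasDerivAt (fun s : ℝ => P (T s u)) (P (L w)) t :=
    ((P.restrictScalars ℝ).hasFDerivAt.comp_hasDerivAt t (hTgen u t ht))
  have h2 : HasDerivAt (fun s : ℝ => ‖P (T s u)‖ ^ 2)
      (2 * (inner ℝ (P w) (P (L w)) : ℝ)) t := h1.norm_sq
  refine ⟨_, h2, ?_⟩
  obtain ⟨g, h, hInner, hγg, hhq⟩ := hdiss w
  have hre : (inner ℝ (P w) (P (L w)) : ℝ) = (@inner ℂ H _ (P (L w)) (P w)).re := by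
    rw [real_inner_eq_re_inner ℂ]
    exact inner_re_symm (𝕜 := ℂ) _ _
  have hwu : ‖w‖ ≤ ‖u‖ := by
    calc ‖T t u‖ ≤ ‖T t‖ * ‖u‖ := (T t).le_opNorm u
    _ ≤ 1 * ‖u‖ := by gcongr; exact hTcon t ht
    _ = ‖u‖ := one_mul _
  have hPw : (0 : ℝ) ≤ ‖P w‖ := norm_nonneg _
  have hbound : h ≤ q * ‖P w‖ * ‖u‖ := by
    calc h ≤ |h| := le_abs_self h
    _ ≤ q * ‖P w‖ * ‖w‖ := hhq
    _ ≤ q * ‖P w‖ * ‖u‖ := by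
        apply mul_le_mul_of_nonneg_left hwu (by positivity)
  rw [hre, hInner]
  have hg2 : -g * ‖P w‖ ^ 2 ≤ -γ * ‖P w‖ ^ 2 := by nlinarith [sq_nonneg ‖P w‖]
  nlinarith
end

section
/- Let γ > 0 and q ≥ 0, and suppose 0 ≤ x(t) ≤ (q/γ)^{1−2^{-r}} + Σ_{j=0}^{r−1} c_j e^{-2^{-j}γt}(q/γ)^{1−2^{-j}} and 0 ≤ y(t) ≤ (p/γ)^{1−2^{-s}} + Σ_{j=0}^{s−1} c_j e^{-2^{-j}γt}(p/γ)^{1−2^{-j}} for all t ≥ 0 with p ≥ 0. Then ∫₀ᵗ x(t−τ)·y(τ) dτ ≤ t(p/γ)^{1−2^{-s}}(q/γ)^{1−2^{-r}} + Σ_{i=0}^{r−1} (2^i c_i/γ)(q/γ)^{1−2^{-i}}(p/γ)^{1−2^{-s}} + Σ_{i=0}^{s−1} (2^i c_i/γ)(p/γ)^{1−2^{-i}}(q/γ)^{1−2^{-r}} + Σ_{i=0}^{r−1} Σ_{j=0, j≠i}^{s−1} c_i c_j (2^{i+j}/((2^i−2^j)γ))(e^{-2^{-i}γt}−e^{-2^{-j}γt})(q/γ)^{1−2^{-i}}(p/γ)^{1−2^{-j}}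 + t Σ_{i=0}^{min(r,s)−1} c_i² e^{-2^{-i}γt}(q/γ)^{1−2^{-i}}(p/γ)^{1−2^{-i}}, where c₀ = 1, c_j = √(c_{j-1}2^j/(2^j−1)). -/
open intervalIntegral Real

lemma int_exp_mul (b t : ℝ) (hb : b ≠ 0) :
    ∫ τ in (0:ℝ)..t, Real.exp (b * τ) = (Real.exp (b * t) - 1) / b := by
  have hderiv : ∀ u ∈ Set.uIcc (0:ℝ) t,
      HasDerivAt (fun u => Real.exp (b * u) / b) (Real.exp (b * u)) u := by
    intro u _
    have h1 : HasDerivAt (fun u : ℝ => b * u) b u := by simpa using (hasDerivAt_id u).const_mul b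
    have h2 := (h1.exp).div_const b
    rw [mul_div_cancel_right₀ _ hb] at h2
    exact h2
  have hint : IntervalIntegrable (fun τ => Real.exp (b * τ)) MeasureTheory.volume 0 t :=
    (Real.continuous_exp.comp (continuous_const.mul continuous_id)).intervalIntegrable 0 t
  rw [intervalIntegral.integral_eq_sub_of_hasDerivAt hderiv hint]
  rw [mul_zero, Real.exp_zero]
  ring

lemma int_exp_neg (μ t : ℝ) (hμ : μ ≠ 0) :
    ∫ τ in (0:ℝ)..t, Real.exp (-(μ * τ)) = (1 - Real.exp (-(μ * t))) / μ := by
  have := int_exp_mul (-μ) t (neg_ne_zero.mpr hμ)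
  simp only [neg_mul] at this
  rw [this, div_neg, ← neg_div, neg_sub]

lemma int_exp_rev (lam t : ℝ) (hl : lam ≠ 0) :
    ∫ τ in (0:ℝ)..t, Real.exp (-(lam * (t - τ))) = (1 - Real.exp (-(lam * t))) / lam := by
  have h1 : ∀ τ : ℝ, Real.exp (-(lam * (t - τ))) = Real.exp (-(lam * t)) * Real.exp (lam * τ) := by
    intro τ; rw [← Real.exp_add]; ring_nf
  simp only [h1]
  rw [intervalIntegral.integral_const_mul, int_exp_mul lam t hl]
  have he : Real.exp (-(lam * t)) * Real.exp (lam * t) = 1 := by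
    rw [← Real.exp_add]; simp
  field_simp
  linear_combination he

lemma int_exp_conv (lam mu t : ℝ) (hl : lam ≠ 0) (hm : mu ≠ 0) :
    ∫ τ in (0:ℝ)..t, Real.exp (-(lam * (t - τ))) * Real.exp (-(mu * τ))
      = if lam = mu then t * Real.exp (-(lam * t))
        else (Real.exp (-(mu * t)) - Real.exp (-(lam * t))) / (lam - mu) := by
  have h1 : ∀ τ : ℝ, Real.exp (-(lam * (t - τ))) * Real.exp (-(mu * τ))
      = Real.exp (-(lam * t)) * Real.exp ((lam - mu) * τ) := by
    intro τ; rw [← Real.exp_add, ← Real.exp_add]; ring_nf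
  simp only [h1]
  rw [intervalIntegral.integral_const_mul]
  by_cases h : lam = mu
  · simp [h, sub_self, intervalIntegral.integral_const, mul_comm]
  · rw [if_neg h, int_exp_mul _ t (sub_ne_zero.mpr h)]
    have : Real.exp (-(lam * t)) * Real.exp ((lam - mu) * t) = Real.exp (-(mu * t)) := by
      rw [← Real.exp_add]; ring_nf
    field_simp
    rw [mul_comm t mu, mul_comm t (lam - mu), ← this]; ring

lemma conv_expand (r s : ℕ) (A B t : ℝ) (a b lam : ℕ → ℝ) (hlam : ∀ i, lam i ≠ 0) :
    (∫ τ in (0:ℝ)..t,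
        (A + ∑ i ∈ Finset.range r, a i * Real.exp (-(lam i * (t - τ)))) *
        (B + ∑ j ∈ Finset.range s, b j * Real.exp (-(lam j * τ))))
    = A * B * t
      + ∑ j ∈ Finset.range s, A * b j * ((1 - Real.exp (-(lam j * t))) / lam j)
      + ∑ i ∈ Finset.range r, B * a i * ((1 - Real.exp (-(lam i * t))) / lam i)
      + ∑ i ∈ Finset.range r, ∑ j ∈ Finset.range s, a i * b j *
          (if lam i = lam j then t * Real.exp (-(lam i * t))
           else (Real.exp (-(lam j * t)) - Real.exp (-(lam i * t))) / (lam i - lam j)) := by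
  have cexp : ∀ L : ℝ, Continuous fun τ : ℝ => Real.exp (-(L * τ)) := by
    intro L; fun_prop
  have cexp2 : ∀ L : ℝ, Continuous fun τ : ℝ => Real.exp (-(L * (t - τ))) := by
    intro L; fun_prop
  have hfun : ∀ τ : ℝ,
      (A + ∑ i ∈ Finset.range r, a i * Real.exp (-(lam i * (t - τ)))) *
        (B + ∑ j ∈ Finset.range s, b j * Real.exp (-(lam j * τ)))
      = A * B
        + (∑ j ∈ Finset.range s, A * b j * Real.exp (-(lam j * τ)))
        + (∑ i ∈ Finset.range r, B * a i * Real.exp (-(lam i * (t - τ))))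
        + ∑ i ∈ Finset.range r, ∑ j ∈ Finset.range s,
            a i * b j * (Real.exp (-(lam i * (t - τ))) * Real.exp (-(lam j * τ))) := by
    intro τ
    have e1 : A * ∑ j ∈ Finset.range s, b j * Real.exp (-(lam j * τ))
        = ∑ j ∈ Finset.range s, A * b j * Real.exp (-(lam j * τ)) := by
      rw [Finset.mul_sum]; exact Finset.sum_congr rfl fun j _ => by ring
    have e2 : (∑ i ∈ Finset.range r, a i * Real.exp (-(lam i * (t - τ)))) * B
        = ∑ i ∈ Finset.range r, B * a i * Real.exp (-(lam i * (t - τ))) := by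
      rw [Finset.sum_mul]; exact Finset.sum_congr rfl fun i _ => by ring
    have e3 : (∑ i ∈ Finset.range r, a i * Real.exp (-(lam i * (t - τ)))) *
          ∑ j ∈ Finset.range s, b j * Real.exp (-(lam j * τ))
        = ∑ i ∈ Finset.range r, ∑ j ∈ Finset.range s,
            a i * b j * (Real.exp (-(lam i * (t - τ))) * Real.exp (-(lam j * τ))) := by
      rw [Finset.sum_mul_sum]
      exact Finset.sum_congr rfl fun i _ => Finset.sum_congr rfl fun j _ => by ring
    linear_combination e1 + e2 + e3
  simp only [hfun]
  have i1 : IntervalIntegrable (fun _ : ℝ => A * B) MeasureTheory.volume 0 t :=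
    intervalIntegrable_const
  have i2 : IntervalIntegrable
      (fun τ : ℝ => ∑ j ∈ Finset.range s, A * b j * Real.exp (-(lam j * τ)))
      MeasureTheory.volume 0 t :=
    (continuous_finset_sum _ fun j _ => (continuous_const.mul (cexp (lam j)))).intervalIntegrable 0 t
  have i3 : IntervalIntegrable
      (fun τ : ℝ => ∑ i ∈ Finset.range r, B * a i * Real.exp (-(lam i * (t - τ))))
      MeasureTheory.volume 0 t :=
    (continuous_finset_sum _ fun i _ => (continuous_const.mul (cexp2 (lam i)))).intervalIntegrable 0 t
  have i4 : IntervalIntegrable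
      (fun τ : ℝ => ∑ i ∈ Finset.range r, ∑ j ∈ Finset.range s,
        a i * b j * (Real.exp (-(lam i * (t - τ))) * Real.exp (-(lam j * τ))))
      MeasureTheory.volume 0 t :=
    (continuous_finset_sum _ fun i _ => continuous_finset_sum _ fun j _ =>
      (continuous_const.mul ((cexp2 (lam i)).mul (cexp (lam j))))).intervalIntegrable 0 t
  rw [intervalIntegral.integral_add ((i1.add i2).add i3) i4,
      intervalIntegral.integral_add (i1.add i2) i3,
      intervalIntegral.integral_add i1 i2]
  have I1 : (∫ _ in (0:ℝ)..t, A * B) = A * B * t := by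
    rw [intervalIntegral.integral_const, smul_eq_mul]; ring
  have I2 : (∫ τ in (0:ℝ)..t, ∑ j ∈ Finset.range s, A * b j * Real.exp (-(lam j * τ)))
      = ∑ j ∈ Finset.range s, A * b j * ((1 - Real.exp (-(lam j * t))) / lam j) := by
    rw [intervalIntegral.integral_finset_sum (f := fun j τ => A * b j * Real.exp (-(lam j * τ)))
      (fun j _ => (continuous_const.mul (cexp (lam j))).intervalIntegrable 0 t)]
    exact Finset.sum_congr rfl fun j _ => by
      rw [intervalIntegral.integral_const_mul, int_exp_neg _ _ (hlam j)]
  have I3 : (∫ τ in (0:ℝ)..t, ∑ i ∈ Finset.range r, B * a i * Real.exp (-(lam i * (t - τ))))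
      = ∑ i ∈ Finset.range r, B * a i * ((1 - Real.exp (-(lam i * t))) / lam i) := by
    rw [intervalIntegral.integral_finset_sum (f := fun i τ => B * a i * Real.exp (-(lam i * (t - τ))))
      (fun i _ => (continuous_const.mul (cexp2 (lam i))).intervalIntegrable 0 t)]
    exact Finset.sum_congr rfl fun i _ => by
      rw [intervalIntegral.integral_const_mul, int_exp_rev _ _ (hlam i)]
  have I4 : (∫ τ in (0:ℝ)..t, ∑ i ∈ Finset.range r, ∑ j ∈ Finset.range s,
        a i * b j * (Real.exp (-(lam i * (t - τ))) * Real.exp (-(lam j * τ))))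
      = ∑ i ∈ Finset.range r, ∑ j ∈ Finset.range s, a i * b j *
          (if lam i = lam j then t * Real.exp (-(lam i * t))
           else (Real.exp (-(lam j * t)) - Real.exp (-(lam i * t))) / (lam i - lam j)) := by
    rw [intervalIntegral.integral_finset_sum (f := fun i τ => ∑ j ∈ Finset.range s,
        a i * b j * (Real.exp (-(lam i * (t - τ))) * Real.exp (-(lam j * τ))))
      (fun i _ => (continuous_finset_sum _ fun j _ =>
        (continuous_const.mul ((cexp2 (lam i)).mul (cexp (lam j))))).intervalIntegrable 0 t)]
    refine Finset.sum_congr rfl fun i _ => ?_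
    rw [intervalIntegral.integral_finset_sum (f := fun j τ =>
        a i * b j * (Real.exp (-(lam i * (t - τ))) * Real.exp (-(lam j * τ))))
      (fun j _ => (continuous_const.mul ((cexp2 (lam i)).mul (cexp (lam j)))).intervalIntegrable 0 t)]
    exact Finset.sum_congr rfl fun j _ => by
      rw [intervalIntegral.integral_const_mul, int_exp_conv _ _ _ (hlam i) (hlam j)]
  rw [I1, I2, I3, I4]

lemma conv_bound (x y : ℝ → ℝ) (r s : ℕ) (A B t : ℝ) (a b lam : ℕ → ℝ)
    (hlam : ∀ i, 0 < lam i) (hA : 0 ≤ A) (hB : 0 ≤ B)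
    (ha : ∀ i, 0 ≤ a i) (hb : ∀ j, 0 ≤ b j)
    (hx_cont : Continuous x) (hy_cont : Continuous y) (ht : 0 ≤ t)
    (hx : ∀ u : ℝ, 0 ≤ u → 0 ≤ x u ∧
      x u ≤ A + ∑ i ∈ Finset.range r, a i * Real.exp (-(lam i * u)))
    (hy : ∀ u : ℝ, 0 ≤ u → 0 ≤ y u ∧
      y u ≤ B + ∑ j ∈ Finset.range s, b j * Real.exp (-(lam j * u))) :
    (∫ τ in (0:ℝ)..t, x (t - τ) * y τ)
      ≤ A * B * t
        + ∑ j ∈ Finset.range s, A * b j / lam j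
        + ∑ i ∈ Finset.range r, B * a i / lam i
        + ∑ i ∈ Finset.range r, ∑ j ∈ Finset.range s, a i * b j *
            (if lam i = lam j then t * Real.exp (-(lam i * t))
             else (Real.exp (-(lam j * t)) - Real.exp (-(lam i * t))) / (lam i - lam j)) := by
  have hlam' : ∀ i, lam i ≠ 0 := fun i => (hlam i).ne'
  have hXcont : Continuous fun τ : ℝ =>
      A + ∑ i ∈ Finset.range r, a i * Real.exp (-(lam i * (t - τ))) :=
    continuous_const.add (continuous_finset_sum _ fun i _ => continuous_const.mul (by fun_prop))
  have hYcont : Continuous fun τ : ℝ =>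
      B + ∑ j ∈ Finset.range s, b j * Real.exp (-(lam j * τ)) :=
    continuous_const.add (continuous_finset_sum _ fun j _ => continuous_const.mul (by fun_prop))
  have step1 : (∫ τ in (0:ℝ)..t, x (t - τ) * y τ)
      ≤ ∫ τ in (0:ℝ)..t,
          (A + ∑ i ∈ Finset.range r, a i * Real.exp (-(lam i * (t - τ)))) *
          (B + ∑ j ∈ Finset.range s, b j * Real.exp (-(lam j * τ))) := by
    apply intervalIntegral.integral_mono_on ht
    · exact ((hx_cont.comp (continuous_const.sub continuous_id)).mul hy_cont).intervalIntegrable 0 t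
    · exact (hXcont.mul hYcont).intervalIntegrable 0 t
    · intro τ hτ
      have h1 : 0 ≤ t - τ := by linarith [hτ.2]
      have hXn : 0 ≤ A + ∑ i ∈ Finset.range r, a i * Real.exp (-(lam i * (t - τ))) :=
        add_nonneg hA (Finset.sum_nonneg fun i _ => mul_nonneg (ha i) (Real.exp_pos _).le)
      exact mul_le_mul (hx _ h1).2 (hy τ hτ.1).2 (hy τ hτ.1).1 hXn
  refine step1.trans ?_
  rw [conv_expand r s A B t a b lam hlam']
  have h2 : ∑ j ∈ Finset.range s, A * b j * ((1 - Real.exp (-(lam j * t))) / lam j)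
      ≤ ∑ j ∈ Finset.range s, A * b j / lam j := by
    refine Finset.sum_le_sum fun j _ => ?_
    have he : A * b j / lam j = A * b j * (1 / lam j) := by ring
    rw [he]
    refine mul_le_mul_of_nonneg_left ?_ (mul_nonneg hA (hb j))
    gcongr
    · exact (hlam j).le
    · linarith [(Real.exp_pos (-(lam j * t))).le]
  have h3 : ∑ i ∈ Finset.range r, B * a i * ((1 - Real.exp (-(lam i * t))) / lam i)
      ≤ ∑ i ∈ Finset.range r, B * a i / lam i := by
    refine Finset.sum_le_sum fun i _ => ?_
    have he : B * a i / lam i = B * a i * (1 / lam i) := by ring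
    rw [he]
    refine mul_le_mul_of_nonneg_left ?_ (mul_nonneg hB (ha i))
    gcongr
    · exact (hlam i).le
    · linarith [(Real.exp_pos (-(lam i * t))).le]
  linarith

theorem convolution_of_decay_bounds (x y : ℝ → ℝ) (γ q p : ℝ) (r s : ℕ) (c : ℕ → ℝ)
    (hγ : 0 < γ) (hq : 0 ≤ q) (hp : 0 ≤ p)
    (hc0 : c 0 = 1)
    (hcrec : ∀ j : ℕ, c (j + 1) = Real.sqrt (c j * 2 ^ (j + 1) / (2 ^ (j + 1) - 1)))
    (hx_cont : Continuous x) (hy_cont : Continuous y)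
    (hx : ∀ t : ℝ, 0 ≤ t → 0 ≤ x t ∧
      x t ≤ (q / γ) ^ (1 - (2:ℝ) ^ (-(r:ℝ)))
        + ∑ j ∈ Finset.range r,
            c j * Real.exp (-(2:ℝ) ^ (-(j:ℝ)) * γ * t) * (q / γ) ^ (1 - (2:ℝ) ^ (-(j:ℝ))))
    (hy : ∀ t : ℝ, 0 ≤ t → 0 ≤ y t ∧
      y t ≤ (p / γ) ^ (1 - (2:ℝ) ^ (-(s:ℝ)))
        + ∑ j ∈ Finset.range s,
            c j * Real.exp (-(2:ℝ) ^ (-(j:ℝ)) * γ * t) * (p / γ) ^ (1 - (2:ℝ) ^ (-(j:ℝ)))) :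
    ∀ t : ℝ, 0 ≤ t →
      (∫ τ in (0:ℝ)..t, x (t - τ) * y τ)
        ≤ t * (p / γ) ^ (1 - (2:ℝ) ^ (-(s:ℝ))) * (q / γ) ^ (1 - (2:ℝ) ^ (-(r:ℝ)))
          + (∑ i ∈ Finset.range r,
              (2 ^ i * c i / γ) * (q / γ) ^ (1 - (2:ℝ) ^ (-(i:ℝ)))
                * (p / γ) ^ (1 - (2:ℝ) ^ (-(s:ℝ))))
          + (∑ i ∈ Finset.range s,
              (2 ^ i * c i / γ) * (p / γ) ^ (1 - (2:ℝ) ^ (-(i:ℝ)))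
                * (q / γ) ^ (1 - (2:ℝ) ^ (-(r:ℝ))))
          + (∑ i ∈ Finset.range r, ∑ j ∈ Finset.range s,
              if j ≠ i then
                c i * c j * (2 ^ (i + j) / ((2 ^ i - 2 ^ j) * γ))
                  * (Real.exp (-(2:ℝ) ^ (-(i:ℝ)) * γ * t) - Real.exp (-(2:ℝ) ^ (-(j:ℝ)) * γ * t))
                  * (q / γ) ^ (1 - (2:ℝ) ^ (-(i:ℝ))) * (p / γ) ^ (1 - (2:ℝ) ^ (-(j:ℝ)))
              else 0)
          + t * ∑ i ∈ Finset.range (min r s),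
              c i ^ 2 * Real.exp (-(2:ℝ) ^ (-(i:ℝ)) * γ * t)
                * (q / γ) ^ (1 - (2:ℝ) ^ (-(i:ℝ))) * (p / γ) ^ (1 - (2:ℝ) ^ (-(i:ℝ))) := by
  intro t ht
  have hγ' : γ ≠ 0 := ne_of_gt hγ
  have hc : ∀ j, 0 ≤ c j := by
    intro j
    cases j with
    | zero => rw [hc0]; norm_num
    | succ n => rw [hcrec n]; exact Real.sqrt_nonneg _
  have hpow : ∀ i : ℕ, (2:ℝ) ^ (-(i:ℝ)) = ((2:ℝ) ^ i)⁻¹ := fun i => by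
    rw [← Real.rpow_natCast 2 i, ← Real.rpow_neg (by norm_num : (0:ℝ) ≤ 2)]
  have h2ne : ∀ i : ℕ, ((2:ℝ) ^ i) ≠ 0 := fun i => (pow_pos two_pos i).ne'
  have hlampos : ∀ i : ℕ, 0 < (2:ℝ) ^ (-(i:ℝ)) * γ := fun i =>
    mul_pos (Real.rpow_pos_of_pos two_pos _) hγ
  have hqγ : 0 ≤ q / γ := div_nonneg hq hγ.le
  have hpγ : 0 ≤ p / γ := div_nonneg hp hγ.le
  have hpowinj : ∀ i j : ℕ, (2:ℝ) ^ i = (2:ℝ) ^ j → i = j := by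
    have hmono : StrictMono fun n : ℕ => (2:ℝ) ^ n := fun m n h =>
      pow_lt_pow_right₀ one_lt_two h
    exact fun i j h => hmono.injective h
  have hinj : ∀ i j : ℕ, ((2:ℝ) ^ (-(i:ℝ)) * γ = (2:ℝ) ^ (-(j:ℝ)) * γ) ↔ i = j := by
    intro i j
    constructor
    · intro h
      have h2 : (2:ℝ) ^ (-(i:ℝ)) = (2:ℝ) ^ (-(j:ℝ)) := mul_right_cancel₀ hγ' h
      rw [hpow, hpow, inv_inj] at h2
      exact hpowinj i j h2
    · rintro rfl; rfl
  have key := conv_bound x y r s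
      ((q / γ) ^ (1 - (2:ℝ) ^ (-(r:ℝ)))) ((p / γ) ^ (1 - (2:ℝ) ^ (-(s:ℝ)))) t
      (fun i => c i * (q / γ) ^ (1 - (2:ℝ) ^ (-(i:ℝ))))
      (fun j => c j * (p / γ) ^ (1 - (2:ℝ) ^ (-(j:ℝ))))
      (fun i => (2:ℝ) ^ (-(i:ℝ)) * γ)
      hlampos
      (Real.rpow_nonneg hqγ _)
      (Real.rpow_nonneg hpγ _)
      (fun i => mul_nonneg (hc i) (Real.rpow_nonneg hqγ _))
      (fun j => mul_nonneg (hc j) (Real.rpow_nonneg hpγ _))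
      hx_cont hy_cont ht
      (fun u hu => ⟨(hx u hu).1, (hx u hu).2.trans_eq (by
        congr 1
        refine Finset.sum_congr rfl fun j _ => ?_
        rw [show -(2:ℝ) ^ (-(j:ℝ)) * γ * u = -((2:ℝ) ^ (-(j:ℝ)) * γ * u) by ring]
        ring)⟩)
      (fun u hu => ⟨(hy u hu).1, (hy u hu).2.trans_eq (by
        congr 1
        refine Finset.sum_congr rfl fun j _ => ?_
        rw [show -(2:ℝ) ^ (-(j:ℝ)) * γ * u = -((2:ℝ) ^ (-(j:ℝ)) * γ * u) by ring]
        ring)⟩)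
  refine key.trans (le_of_eq ?_)
  have h1 : (q / γ) ^ (1 - (2:ℝ) ^ (-(r:ℝ))) * (p / γ) ^ (1 - (2:ℝ) ^ (-(s:ℝ))) * t
      = t * (p / γ) ^ (1 - (2:ℝ) ^ (-(s:ℝ))) * (q / γ) ^ (1 - (2:ℝ) ^ (-(r:ℝ))) := by ring
  have h2 : ∑ j ∈ Finset.range s,
        (q / γ) ^ (1 - (2:ℝ) ^ (-(r:ℝ))) * (c j * (p / γ) ^ (1 - (2:ℝ) ^ (-(j:ℝ))))
          / ((2:ℝ) ^ (-(j:ℝ)) * γ)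
      = ∑ i ∈ Finset.range s,
          (2 ^ i * c i / γ) * (p / γ) ^ (1 - (2:ℝ) ^ (-(i:ℝ)))
            * (q / γ) ^ (1 - (2:ℝ) ^ (-(r:ℝ))) := by
    refine Finset.sum_congr rfl fun j _ => ?_
    rw [hpow j, div_eq_mul_one_div,
      show (1:ℝ)/(((2:ℝ)^j)⁻¹*γ) = 2^j/γ by
        rw [one_div, mul_inv, inv_inv]; ring]
    ring
  have h3 : ∑ i ∈ Finset.range r,
        (p / γ) ^ (1 - (2:ℝ) ^ (-(s:ℝ))) * (c i * (q / γ) ^ (1 - (2:ℝ) ^ (-(i:ℝ))))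
          / ((2:ℝ) ^ (-(i:ℝ)) * γ)
      = ∑ i ∈ Finset.range r,
          (2 ^ i * c i / γ) * (q / γ) ^ (1 - (2:ℝ) ^ (-(i:ℝ)))
            * (p / γ) ^ (1 - (2:ℝ) ^ (-(s:ℝ))) := by
    refine Finset.sum_congr rfl fun i _ => ?_
    rw [hpow i, div_eq_mul_one_div,
      show (1:ℝ)/(((2:ℝ)^i)⁻¹*γ) = 2^i/γ by
        rw [one_div, mul_inv, inv_inv]; ring]
    ring
  have h4 : (∑ i ∈ Finset.range r, ∑ j ∈ Finset.range s,
        c i * (q / γ) ^ (1 - (2:ℝ) ^ (-(i:ℝ))) * (c j * (p / γ) ^ (1 - (2:ℝ) ^ (-(j:ℝ)))) *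
          (if (2:ℝ) ^ (-(i:ℝ)) * γ = (2:ℝ) ^ (-(j:ℝ)) * γ
           then t * Real.exp (-((2:ℝ) ^ (-(i:ℝ)) * γ * t))
           else (Real.exp (-((2:ℝ) ^ (-(j:ℝ)) * γ * t)) - Real.exp (-((2:ℝ) ^ (-(i:ℝ)) * γ * t)))
             / ((2:ℝ) ^ (-(i:ℝ)) * γ - (2:ℝ) ^ (-(j:ℝ)) * γ)))
      = (∑ i ∈ Finset.range r, ∑ j ∈ Finset.range s,
          if j ≠ i then
            c i * c j * (2 ^ (i + j) / ((2 ^ i - 2 ^ j) * γ))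
              * (Real.exp (-(2:ℝ) ^ (-(i:ℝ)) * γ * t) - Real.exp (-(2:ℝ) ^ (-(j:ℝ)) * γ * t))
              * (q / γ) ^ (1 - (2:ℝ) ^ (-(i:ℝ))) * (p / γ) ^ (1 - (2:ℝ) ^ (-(j:ℝ)))
          else 0)
        + t * ∑ i ∈ Finset.range (min r s),
            c i ^ 2 * Real.exp (-(2:ℝ) ^ (-(i:ℝ)) * γ * t)
              * (q / γ) ^ (1 - (2:ℝ) ^ (-(i:ℝ))) * (p / γ) ^ (1 - (2:ℝ) ^ (-(i:ℝ))) := by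
    have hsplit : ∀ i ∈ Finset.range r, ∀ j ∈ Finset.range s,
        c i * (q / γ) ^ (1 - (2:ℝ) ^ (-(i:ℝ))) * (c j * (p / γ) ^ (1 - (2:ℝ) ^ (-(j:ℝ)))) *
          (if (2:ℝ) ^ (-(i:ℝ)) * γ = (2:ℝ) ^ (-(j:ℝ)) * γ
           then t * Real.exp (-((2:ℝ) ^ (-(i:ℝ)) * γ * t))
           else (Real.exp (-((2:ℝ) ^ (-(j:ℝ)) * γ * t)) - Real.exp (-((2:ℝ) ^ (-(i:ℝ)) * γ * t)))
             / ((2:ℝ) ^ (-(i:ℝ)) * γ - (2:ℝ) ^ (-(j:ℝ)) * γ))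
        = (if j ≠ i then
            c i * c j * (2 ^ (i + j) / ((2 ^ i - 2 ^ j) * γ))
              * (Real.exp (-(2:ℝ) ^ (-(i:ℝ)) * γ * t) - Real.exp (-(2:ℝ) ^ (-(j:ℝ)) * γ * t))
              * (q / γ) ^ (1 - (2:ℝ) ^ (-(i:ℝ))) * (p / γ) ^ (1 - (2:ℝ) ^ (-(j:ℝ)))
          else 0)
          + (if j = i then
              t * (c i ^ 2 * Real.exp (-(2:ℝ) ^ (-(i:ℝ)) * γ * t)
                * (q / γ) ^ (1 - (2:ℝ) ^ (-(i:ℝ))) * (p / γ) ^ (1 - (2:ℝ) ^ (-(i:ℝ))))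
            else 0) := by
      intro i _ j _
      have hargi : -((2:ℝ) ^ (-(i:ℝ)) * γ * t) = -(2:ℝ) ^ (-(i:ℝ)) * γ * t := by ring
      have hargj : -((2:ℝ) ^ (-(j:ℝ)) * γ * t) = -(2:ℝ) ^ (-(j:ℝ)) * γ * t := by ring
      by_cases hij : j = i
      · subst hij
        rw [if_pos rfl, if_neg (by simp), if_pos rfl, hargi]
        ring
      · have hij' : i ≠ j := fun h => hij h.symm
        rw [if_neg (fun h => hij' ((hinj i j).1 h)), if_pos hij, if_neg hij, add_zero,
            hargi, hargj]
        have hne : (2:ℝ) ^ i ≠ (2:ℝ) ^ j := fun h => hij' (hpowinj i j h)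
        have hd : ((2:ℝ) ^ i)⁻¹ * γ - ((2:ℝ) ^ j)⁻¹ * γ ≠ 0 := by
          rw [sub_ne_zero]
          intro h
          exact hne (inv_inj.mp (mul_right_cancel₀ hγ' h))
        rw [hpow i, hpow j]
        have hsub : (2:ℝ) ^ i - (2:ℝ) ^ j ≠ 0 := sub_ne_zero.mpr hne
        have hD : ((2:ℝ) ^ i)⁻¹ * γ - ((2:ℝ) ^ j)⁻¹ * γ
            = -((((2:ℝ) ^ i - 2 ^ j) * γ) / ((2:ℝ) ^ i * 2 ^ j)) := by
          rw [show -((((2:ℝ) ^ i - 2 ^ j) * γ) / ((2:ℝ) ^ i * 2 ^ j))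
              = (-(((2:ℝ) ^ i - 2 ^ j) * γ)) / ((2:ℝ) ^ i * 2 ^ j) from (neg_div _ _).symm,
            eq_div_iff (mul_ne_zero (h2ne i) (h2ne j))]
          linear_combination γ * (2:ℝ) ^ j * mul_inv_cancel₀ (h2ne i)
            - γ * (2:ℝ) ^ i * mul_inv_cancel₀ (h2ne j)
        rw [hD, div_neg, div_div_eq_mul_div]
        ring
    rw [Finset.sum_congr rfl fun i hi => Finset.sum_congr rfl fun j hj => hsplit i hi j hj]
    rw [Finset.sum_congr rfl fun i (_ : i ∈ Finset.range r) => Finset.sum_add_distrib,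
        Finset.sum_add_distrib]
    congr 1
    have hiter : ∀ i : ℕ, (∑ j ∈ Finset.range s,
        if j = i then
          t * (c i ^ 2 * Real.exp (-(2:ℝ) ^ (-(i:ℝ)) * γ * t)
            * (q / γ) ^ (1 - (2:ℝ) ^ (-(i:ℝ))) * (p / γ) ^ (1 - (2:ℝ) ^ (-(i:ℝ))))
        else 0)
        = if i ∈ Finset.range s then
            t * (c i ^ 2 * Real.exp (-(2:ℝ) ^ (-(i:ℝ)) * γ * t)
              * (q / γ) ^ (1 - (2:ℝ) ^ (-(i:ℝ))) * (p / γ) ^ (1 - (2:ℝ) ^ (-(i:ℝ))))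
          else 0 := fun i => Finset.sum_ite_eq' (Finset.range s) i _
    rw [Finset.sum_congr rfl fun i (_ : i ∈ Finset.range r) => hiter i]
    rw [Finset.sum_ite_mem]
    have hrange : Finset.range r ∩ Finset.range s = Finset.range (min r s) := by
      ext k; simp [Nat.lt_min]
    rw [hrange, Finset.mul_sum]
  linarith
end
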